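/- For every x ∈ [0,1] and every n ≥ 1, the error-sum function satisfies the self-similarity formula E(x) = Σ_{k=1}^n (x - s_k(x)) + (-1)^n E(T^n x)/(d_1(x)···d_n(x)), with the convention that the last term is 0 if some digit is infinite. -/
import Mathlib


open scoped BigOperators

/-- Reciprocal of an extended natural number as a real, with `1/∞ = 0`. -/
noncomputable def pinv (a : ℕ∞) : ℝ := ((a.toNat : ℕ) : ℝ)⁻¹

/-- First Pierce digit: `⌊1/x⌋` for `x ≠ 0`, and `∞` for `x = 0`. -/
noncomputable def pd1 (x : ℝ) : ℕ∞ := if x = 0 then ⊤ else (⌊x⁻¹⌋₊ : ℕ∞)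

/-- Pierce map `T(x) = 1 - ⌊1/x⌋ x` for `x ≠ 0`, `T(0) = 0`. -/
noncomputable def pT (x : ℝ) : ℝ := if x = 0 then 0 else 1 - (⌊x⁻¹⌋₊ : ℝ) * x

/-- `n`-th Pierce digit `d_n(x) = d_1(T^{n-1} x)` (for `n ≥ 1`). -/
noncomputable def pdig (n : ℕ) (x : ℝ) : ℕ∞ := pd1 (pT^[n-1] x)

/-- `1/(d_1(x) ⋯ d_n(x))`, with the convention that a factor `∞` makes it `0`. -/
noncomputable def pprodR (n : ℕ) (x : ℝ) : ℝ := ∏ k ∈ Finset.Icc 1 n, pinv (pdig k x)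

/-- `n`-th partial sum `s_n(x)` of the Pierce expansion of `x`. -/
noncomputable def psum (n : ℕ) (x : ℝ) : ℝ :=
  ∑ k ∈ Finset.Icc 1 n, (-1 : ℝ) ^ (k + 1) * pprodR k x

/-- The error-sum function of Pierce expansions `E(x) = Σ_{n≥1} (x - s_n(x))`. -/
noncomputable def pE (x : ℝ) : ℝ := ∑' n : ℕ, (x - psum (n + 1) x)

/-- A Pierce sequence (0-indexed: `σ k` is the paper's `σ_{k+1}`): terms are positive, strictly
increasing while finite, and once a term is `∞` all later terms are `∞`. -/
def IsPierce (σ : ℕ → ℕ∞) : Prop :=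
  1 ≤ σ 0 ∧ ∀ n, σ n < σ (n + 1) ∨ (σ n = ⊤ ∧ σ (n + 1) = ⊤)

/-- `n`-th partial sum `φ_n(σ)`. -/
noncomputable def pphiN (n : ℕ) (σ : ℕ → ℕ∞) : ℝ :=
  ∑ k ∈ Finset.range n, (-1 : ℝ) ^ k * ∏ i ∈ Finset.range (k + 1), pinv (σ i)

/-- `φ(σ) = Σ_{k≥1} (-1)^{k+1}/(σ_1 ⋯ σ_k)`. -/
noncomputable def pphi (σ : ℕ → ℕ∞) : ℝ :=
  ∑' k : ℕ, (-1 : ℝ) ^ k * ∏ i ∈ Finset.range (k + 1), pinv (σ i)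

/-- The error-sum function of Pierce sequences `E*(σ) = Σ_{n≥1} (φ(σ) - φ_n(σ))`. -/
noncomputable def pEstar (σ : ℕ → ℕ∞) : ℝ := ∑' n : ℕ, (pphi σ - pphiN (n + 1) σ)

/-- The series formula `Σ_{n≥1} (-1)^n n/(σ_1 ⋯ σ_{n+1})` for the error-sum of a sequence. -/
noncomputable def pEstarSeries (σ : ℕ → ℕ∞) : ℝ :=
  ∑' n : ℕ, (-1 : ℝ) ^ (n + 1) * (n + 1) * ∏ i ∈ Finset.range (n + 2), pinv (σ i)

/-- The metric `ρ(x,y) = 1/x + 1/y` for `x ≠ y` (with `1/∞ = 0`), `ρ(x,x) = 0`. -/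
noncomputable def prho (x y : ℕ∞) : ℝ := if x = y then 0 else pinv x + pinv y

/-- The metric `ρ^ℕ(σ,τ) = Σ_{n≥1} ρ(σ_n, τ_n)/n!` on sequences. -/
noncomputable def prhoN (σ τ : ℕ → ℕ∞) : ℝ :=
  ∑' n : ℕ, prho (σ n) (τ n) / ((n + 1).factorial : ℝ)

lemma pinv_nonneg' (a : ℕ∞) : 0 ≤ pinv a := by
  unfold pinv; positivity

lemma pT_mem {x : ℝ} (hx : x ∈ Set.Icc (0:ℝ) 1) : pT x ∈ Set.Icc (0:ℝ) 1 := by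
  rcases eq_or_ne x 0 with h | h
  · simp [pT, h]
  · have hx0 : 0 < x := lt_of_le_of_ne hx.1 (Ne.symm h)
    have hfl : (⌊x⁻¹⌋₊ : ℝ) ≤ x⁻¹ := Nat.floor_le (by positivity)
    have h1 : (⌊x⁻¹⌋₊ : ℝ) * x ≤ 1 := by
      calc (⌊x⁻¹⌋₊ : ℝ) * x ≤ x⁻¹ * x := by nlinarith
      _ = 1 := inv_mul_cancel₀ h
    simp only [pT, if_neg h]
    constructor
    · linarith
    · nlinarith [Nat.cast_nonneg (α := ℝ) ⌊x⁻¹⌋₊]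

lemma pT_le_half {x : ℝ} (hx : x ∈ Set.Icc (0:ℝ) 1) : pT x ≤ 1/2 := by
  rcases eq_or_ne x 0 with h | h
  · simp [pT, h]
  · have hx0 : 0 < x := lt_of_le_of_ne hx.1 (Ne.symm h)
    have hd : 1 ≤ ⌊x⁻¹⌋₊ := Nat.le_floor (by rw [Nat.cast_one]; exact (one_le_inv₀ hx0).2 hx.2)
    have hd1 : (1:ℝ) ≤ (⌊x⁻¹⌋₊ : ℝ) := by exact_mod_cast hd
    have hlt : x⁻¹ < (⌊x⁻¹⌋₊ : ℝ) + 1 := Nat.lt_floor_add_one _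
    have hx1 : 1 < ((⌊x⁻¹⌋₊ : ℝ) + 1) * x := by
      have := (inv_lt_iff_one_lt_mul₀ hx0).mp hlt
      linarith [this]
    simp only [pT, if_neg h]
    nlinarith

lemma pT_iter_mem {x : ℝ} (hx : x ∈ Set.Icc (0:ℝ) 1) (m : ℕ) :
    pT^[m] x ∈ Set.Icc (0:ℝ) 1 := by
  induction m with
  | zero => simpa using hx
  | succ m ih => rw [Function.iterate_succ_apply']; exact pT_mem ih

lemma pinv_pd1_le_one {y : ℝ} (hy : y ∈ Set.Icc (0:ℝ) 1) : pinv (pd1 y) ≤ 1 := by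
  rcases eq_or_ne y 0 with h | h
  · simp [pd1, pinv, h]
  · have hy0 : 0 < y := lt_of_le_of_ne hy.1 (Ne.symm h)
    have hd : 1 ≤ ⌊y⁻¹⌋₊ := Nat.le_floor (by rw [Nat.cast_one]; exact (one_le_inv₀ hy0).2 hy.2)
    simp only [pd1, if_neg h, pinv, ENat.toNat_coe]
    rw [inv_le_one_iff₀]
    right; exact_mod_cast hd

lemma pinv_pd1_le_half {y : ℝ} (hy0 : 0 ≤ y) (hy : y ≤ 1/2) : pinv (pd1 y) ≤ 1/2 := by
  rcases eq_or_ne y 0 with h | h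
  · simp [pd1, pinv, h]
  · have hy0' : 0 < y := lt_of_le_of_ne hy0 (Ne.symm h)
    have hd : 2 ≤ ⌊y⁻¹⌋₊ := Nat.le_floor (by
      rw [Nat.cast_ofNat]
      rw [le_inv_comm₀ (by norm_num) hy0']
      linarith)
    have hd' : (2:ℝ) ≤ (⌊y⁻¹⌋₊ : ℝ) := by exact_mod_cast hd
    simp only [pd1, if_neg h, pinv, ENat.toNat_coe]
    rw [inv_le_comm₀ (by linarith) (by norm_num)]
    linarith

lemma pstep {y : ℝ} (hy : y ∈ Set.Icc (0:ℝ) 1) : pinv (pd1 y) * (1 - pT y) = y := by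
  rcases eq_or_ne y 0 with h | h
  · simp [pd1, pinv, pT, h]
  · have hy0 : 0 < y := lt_of_le_of_ne hy.1 (Ne.symm h)
    have hd : 1 ≤ ⌊y⁻¹⌋₊ := Nat.le_floor (by rw [Nat.cast_one]; exact (one_le_inv₀ hy0).2 hy.2)
    have hd0 : ((⌊y⁻¹⌋₊ : ℕ) : ℝ) ≠ 0 := by positivity
    simp only [pd1, if_neg h, pinv, ENat.toNat_coe, pT, if_neg h]
    rw [sub_sub_cancel]
    exact inv_mul_cancel_left₀ hd0 y

lemma pprodR_eq (m : ℕ) (x : ℝ) :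
    pprodR m x = ∏ i ∈ Finset.range m, pinv (pd1 (pT^[i] x)) := by
  induction m with
  | zero => simp [pprodR]
  | succ m ih =>
    rw [pprodR, Finset.prod_Icc_succ_top (Nat.le_add_left 1 m), ← pprodR,
      Finset.prod_range_succ, ih, pdig]
    simp

lemma psum_eq (m : ℕ) (x : ℝ) :
    psum m x = ∑ i ∈ Finset.range m, (-1:ℝ)^i * pprodR (i+1) x := by
  induction m with
  | zero => simp [psum]
  | succ m ih =>
    rw [psum, Finset.sum_Icc_succ_top (Nat.le_add_left 1 m), ← psum,
      Finset.sum_range_succ, ih]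
    have h2 : ((-1:ℝ))^(m+1+1) = (-1)^m := by rw [pow_succ, pow_succ]; ring
    rw [h2]

lemma pkey {x : ℝ} (hx : x ∈ Set.Icc (0:ℝ) 1) (m : ℕ) :
    x = psum m x + (-1:ℝ)^m * pprodR m x * pT^[m] x := by
  induction m with
  | zero => simp [psum, pprodR]
  | succ m ih =>
    have hy := pT_iter_mem hx m
    have hstep := pstep hy
    have hps : psum (m+1) x = psum m x + (-1:ℝ)^m * (pprodR m x * pinv (pd1 (pT^[m] x))) := by
      rw [psum_eq, psum_eq, Finset.sum_range_succ, pprodR_eq, pprodR_eq,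
        Finset.prod_range_succ]
    have hpp : pprodR (m+1) x = pprodR m x * pinv (pd1 (pT^[m] x)) := by
      rw [pprodR_eq, pprodR_eq, Finset.prod_range_succ]
    rw [hps, hpp, Function.iterate_succ_apply']
    linear_combination ih + ((-1:ℝ)^(m+1) * pprodR m x) * hstep

lemma pprodR_nonneg (m : ℕ) (x : ℝ) : 0 ≤ pprodR m x := by
  rw [pprodR_eq]; exact Finset.prod_nonneg fun i _ => pinv_nonneg' _

lemma pprodR_le {x : ℝ} (hx : x ∈ Set.Icc (0:ℝ) 1) (m : ℕ) :
    pprodR (m+1) x ≤ (1/2:ℝ)^m := by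
  rw [pprodR_eq, Finset.prod_range_succ']
  have h1 : pinv (pd1 (pT^[0] x)) ≤ 1 := pinv_pd1_le_one hx
  have h2 : ∏ i ∈ Finset.range m, pinv (pd1 (pT^[i+1] x)) ≤ (1/2:ℝ)^m := by
    calc ∏ i ∈ Finset.range m, pinv (pd1 (pT^[i+1] x))
        ≤ ∏ _i ∈ Finset.range m, (1/2:ℝ) := by
          apply Finset.prod_le_prod (fun i _ => pinv_nonneg' _)
          intro i _
          have := pT_iter_mem hx i
          rw [Function.iterate_succ_apply']
          exact pinv_pd1_le_half (pT_mem this).1 (pT_le_half this)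
      _ = (1/2:ℝ)^m := by rw [Finset.prod_const, Finset.card_range]
  calc (∏ i ∈ Finset.range m, pinv (pd1 (pT^[i+1] x))) * pinv (pd1 (pT^[0] x))
      ≤ (∏ i ∈ Finset.range m, pinv (pd1 (pT^[i+1] x))) * 1 :=
        mul_le_mul_of_nonneg_left h1 (Finset.prod_nonneg fun i _ => pinv_nonneg' _)
    _ ≤ (1/2:ℝ)^m := by rw [mul_one]; exact h2

lemma psummable {x : ℝ} (hx : x ∈ Set.Icc (0:ℝ) 1) :
    Summable (fun m : ℕ => x - psum (m+1) x) := by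
  apply Summable.of_abs
  apply Summable.of_nonneg_of_le (fun m => abs_nonneg _) (fun m => ?_)
    (summable_geometric_of_lt_one (by norm_num) (by norm_num : (1/2:ℝ) < 1))
  have hk := pkey hx (m+1)
  have h1 : x - psum (m+1) x = (-1:ℝ)^(m+1) * pprodR (m+1) x * pT^[m+1] x := by
    linarith [hk]
  rw [h1, abs_mul, abs_mul, abs_pow, abs_neg, abs_one, one_pow, one_mul,
    abs_of_nonneg (pprodR_nonneg _ _), abs_of_nonneg (pT_iter_mem hx (m+1)).1]
  calc pprodR (m+1) x * pT^[m+1] x ≤ pprodR (m+1) x * 1 :=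
        mul_le_mul_of_nonneg_left (pT_iter_mem hx (m+1)).2 (pprodR_nonneg _ _)
    _ ≤ (1/2:ℝ)^m := by rw [mul_one]; exact pprodR_le hx m

lemma pprodR_add (n j : ℕ) (x : ℝ) :
    pprodR (n + j) x = pprodR n x * pprodR j (pT^[n] x) := by
  rw [pprodR_eq, pprodR_eq, pprodR_eq, Finset.prod_range_add]
  congr 1
  apply Finset.prod_congr rfl
  intro i _
  rw [add_comm n i, Function.iterate_add_apply]

lemma ptail {x : ℝ} (hx : x ∈ Set.Icc (0:ℝ) 1) (n j : ℕ) :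
    x - psum (n + j) x = (-1:ℝ)^n * pprodR n x * (pT^[n] x - psum j (pT^[n] x)) := by
  have h1 := pkey hx (n + j)
  have h2 := pkey (pT_iter_mem hx n) j
  have h3 : pT^[n + j] x = pT^[j] (pT^[n] x) := by
    rw [add_comm, Function.iterate_add_apply]
  rw [pprodR_add, h3] at h1
  linear_combination h1 - ((-1:ℝ)^n * pprodR n x) * h2

theorem stmt17 (x : ℝ) (hx : x ∈ Set.Icc (0 : ℝ) 1) (n : ℕ) (hn : 1 ≤ n) :
    pE x = (∑ k ∈ Finset.Icc 1 n, (x - psum k x)) +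
      (-1 : ℝ) ^ n * pprodR n x * pE (pT^[n] x) := by
  have hsum := psummable hx
  rw [pE, ← Summable.sum_add_tsum_nat_add n hsum]
  congr 1
  · induction n with
    | zero => simp
    | succ m ih =>
      rcases Nat.eq_zero_or_pos m with hm | hm
      · subst hm; simp
      · rw [Finset.sum_range_succ, ih hm, Finset.sum_Icc_succ_top (Nat.le_add_left 1 m)]
  · have hterm : ∀ i : ℕ, x - psum (i + n + 1) x =
        ((-1:ℝ)^n * pprodR n x) * (pT^[n] x - psum (i+1) (pT^[n] x)) := by
      intro i
      have := ptail hx n (i+1)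
      rwa [show n + (i+1) = i + n + 1 by omega] at this
    calc ∑' i : ℕ, (x - psum (i + n + 1) x)
        = ∑' i : ℕ, ((-1:ℝ)^n * pprodR n x) * (pT^[n] x - psum (i+1) (pT^[n] x)) :=
          tsum_congr hterm
      _ = (-1:ℝ)^n * pprodR n x * pE (pT^[n] x) := by
          rw [tsum_mul_left, pE]
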